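/- arXiv:1606.02345 — 5 statements merged into one kernel-verified Lean document; each statement's English description precedes it below -/
import Mathlib

section
/- Let F be a free group, H a subgroup of F, and a ∈ F \ H. If there exists w ∈ F, not a proper power in F, with w ∈ H and a⁻¹wa ∈ H, then H is an S-subgroup of F, i.e., there exists v ∈ H with v^H ≠ v^F ∩ H. -/
/-- The conjugacy class of `w` by conjugators from the subgroup `H`. -/
def conjClassIn {F : Type*} [Group F] (H : Subgroup F) (w : F) : Set F :=
  {x | ∃ h ∈ H, x = h⁻¹ * w * h}

/-- `H` is an S-subgroup of `F` if some `w ∈ H` satisfies `w^H ≠ w^F ∩ H`. -/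
def IsSSubgroup {F : Type*} [Group F] (H : Subgroup F) : Prop :=
  ∃ w ∈ H, conjClassIn H w ≠ conjClassIn (⊤ : Subgroup F) w ∩ (H : Set F)

/-- `H` has the Almost Congruence Extension Property in `F`: there is a finite set `Φ`
of nontrivial elements of `H` such that for every subgroup `N ≤ H` normal in `H` with
`N ∩ Φ = ∅`, one has `H ∩ ⟪N⟫_F = N`. -/
def ACEP {F : Type*} [Group F] (H : Subgroup F) : Prop :=
  ∃ Φ : Finset F, (∀ x ∈ Φ, x ∈ H ∧ x ≠ 1) ∧
    ∀ N : Subgroup F, N ≤ H →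
      (∀ h ∈ H, ∀ x ∈ N, h * x * h⁻¹ ∈ N) →
      (∀ x ∈ Φ, x ∉ N) →
      (H : Set F) ∩ (Subgroup.normalClosure (N : Set F) : Set F) = (N : Set F)

/-- `w` is a proper power: `w = a ^ n` for some `n ≥ 2`. -/
def IsProperPower {G : Type*} [Group G] (w : G) : Prop :=
  ∃ a : G, ∃ n : ℕ, 2 ≤ n ∧ w = a ^ n

lemma of_mul_of_ne' {α : Type*} {x y : α} (h : x ≠ y) :
    FreeGroup.of x * FreeGroup.of y ≠ FreeGroup.of y * FreeGroup.of x := by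
  classical
  intro he
  have key : FreeGroup.of true * FreeGroup.of false = FreeGroup.of false * FreeGroup.of true := by
    have := congrArg (FreeGroup.lift (fun s =>
      if s = x then FreeGroup.of true else if s = y then FreeGroup.of false else 1)) he
    simpa [h, h.symm] using this
  exact absurd key (by decide)

lemma comm_free_cyclic' {G : Type*} [Group G] [IsFreeGroup G]
    (hc : ∀ x y : G, x * y = y * x) : ∃ c : G, ∀ x : G, x ∈ Subgroup.zpowers c := by
  classical
  set S := IsFreeGroup.Generators G
  set e : FreeGroup S ≃* G := IsFreeGroup.mulEquiv G with he
  have hS : Subsingleton S := by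
    constructor
    intro x y
    by_contra hxy
    apply of_mul_of_ne' hxy
    apply e.injective
    simpa using hc (e (FreeGroup.of x)) (e (FreeGroup.of y))
  rcases isEmpty_or_nonempty S with hS0 | ⟨⟨s0⟩⟩
  · haveI : Subsingleton G := e.symm.toEquiv.subsingleton
    exact ⟨1, fun x => by rw [Subsingleton.elim x 1]; exact one_mem _⟩
  · refine ⟨e (FreeGroup.of s0), fun x => ?_⟩
    have hrange : Set.range (FreeGroup.of : S → FreeGroup S) = {FreeGroup.of s0} := by
      ext u
      simp only [Set.mem_range, Set.mem_singleton_iff]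
      constructor
      · rintro ⟨s, rfl⟩; rw [Subsingleton.elim s s0]
      · rintro rfl; exact ⟨s0, rfl⟩
    have htop : Subgroup.zpowers (FreeGroup.of s0) = (⊤ : Subgroup (FreeGroup S)) := by
      rw [Subgroup.zpowers_eq_closure, ← hrange, FreeGroup.closure_range_of]
    have hu : e.symm x ∈ Subgroup.zpowers (FreeGroup.of s0) := by
      rw [htop]; trivial
    rcases Subgroup.mem_zpowers_iff.mp hu with ⟨k, hk⟩
    refine Subgroup.mem_zpowers_iff.mpr ⟨k, ?_⟩
    have := congrArg e hk
    simpa using this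

/-- If `a ∉ H`, `w` is not a proper power, `w ∈ H` and `a⁻¹ w a ∈ H`, then `H` is an
S-subgroup of the free group. -/
theorem stmt2 {X : Type*} (H : Subgroup (FreeGroup X)) (a w : FreeGroup X)
    (ha : a ∉ H) (hnp : ¬ IsProperPower w) (hw : w ∈ H) (hwa : a⁻¹ * w * a ∈ H) :
    IsSSubgroup H := by
  classical
  refine ⟨w, hw, fun heq => ?_⟩
  have hmem : a⁻¹ * w * a ∈ conjClassIn (⊤ : Subgroup (FreeGroup X)) w ∩ (H : Set (FreeGroup X)) :=
    ⟨⟨a, trivial, rfl⟩, hwa⟩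
  rw [← heq] at hmem
  obtain ⟨h, hH, hh⟩ := hmem
  set g := a * h⁻¹ with hg
  have hgw : w * g = g * w := by
    have h2 : a * (a⁻¹ * w * a) * h⁻¹ = a * (h⁻¹ * w * h) * h⁻¹ := by rw [hh]
    simpa [mul_assoc, hg] using h2
  set K := Subgroup.closure ({g, w} : Set (FreeGroup X)) with hK
  have hgK : g ∈ K := Subgroup.subset_closure (by simp)
  have hwK : w ∈ K := Subgroup.subset_closure (by simp)
  have hcomm2 : ∀ x ∈ K, Commute x g ∧ Commute x w := by
    intro x hx
    induction hx using Subgroup.closure_induction with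
    | mem x hx =>
      rcases hx with rfl | rfl
      · exact ⟨Commute.refl _, hgw.symm⟩
      · exact ⟨hgw, Commute.refl _⟩
    | one => exact ⟨Commute.one_left _, Commute.one_left _⟩
    | mul x y hx hy ihx ihy => exact ⟨ihx.1.mul_left ihy.1, ihx.2.mul_left ihy.2⟩
    | inv x hx ihx => exact ⟨ihx.1.inv_left, ihx.2.inv_left⟩
  have hcomm : ∀ x ∈ K, ∀ y ∈ K, x * y = y * x := by
    intro x hx
    induction hx using Subgroup.closure_induction with
    | mem x hx =>
      intro y hy
      rcases hx with rfl | rfl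
      · exact ((hcomm2 y hy).1).symm
      · exact ((hcomm2 y hy).2).symm
    | one => intro y hy; simp
    | mul x z hx hz ihx ihz =>
      intro y hy
      exact Commute.mul_left (ihx y hy) (ihz y hy)
    | inv x hx ihx =>
      intro y hy
      exact Commute.inv_left (ihx y hy)
  obtain ⟨c, hcyc⟩ := comm_free_cyclic' (G := K)
    (fun x y => Subtype.ext (hcomm x x.2 y y.2))
  obtain ⟨m, hm⟩ := Subgroup.mem_zpowers_iff.mp (hcyc ⟨w, hwK⟩)
  obtain ⟨n, hn⟩ := Subgroup.mem_zpowers_iff.mp (hcyc ⟨g, hgK⟩)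
  have hmF : (c : FreeGroup X) ^ m = w := by
    have := congrArg (Subtype.val) hm
    simpa using this
  have hnF : (c : FreeGroup X) ^ n = g := by
    have := congrArg (Subtype.val) hn
    simpa using this
  have hm1 : m = 1 ∨ m = -1 := by
    by_contra hcon
    push_neg at hcon
    apply hnp
    rcases lt_trichotomy m 0 with hlt | rfl | hgt
    · refine ⟨(c : FreeGroup X)⁻¹, (-m).toNat, by omega, ?_⟩
      have h3 : ((c : FreeGroup X)⁻¹) ^ ((-m).toNat) = (c : FreeGroup X) ^ m := by
        rw [← zpow_natCast, Int.toNat_of_nonneg (by omega : (0:ℤ) ≤ -m)]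
        simp [zpow_neg]
      rw [h3, hmF]
    · exact ⟨1, 2, le_refl 2, by rw [← hmF]; simp⟩
    · refine ⟨(c : FreeGroup X), m.toNat, by omega, ?_⟩
      rw [← hmF, ← zpow_natCast, Int.toNat_of_nonneg hgt.le]
  have hgH : g ∈ H := by
    rcases hm1 with rfl | rfl
    · have hc : (c : FreeGroup X) = w := by simpa using hmF
      rw [← hnF, hc]
      exact Subgroup.zpow_mem H hw n
    · have hc : (c : FreeGroup X) = w⁻¹ := by
        rw [zpow_neg, zpow_one] at hmF
        rw [← hmF]; simp
      rw [← hnF, hc]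
      exact Subgroup.zpow_mem H (inv_mem hw) n
  apply ha
  have : a = g * h := by rw [hg]; simp [mul_assoc]
  rw [this]
  exact mul_mem hgH hH
end

section
/- Let F be a free group and w a nontrivial element of F. Then w is not conjugate to w⁻¹ in F. -/
/-!
If `c * w * c⁻¹ = w⁻¹`, then `(c * w) ^ 2 = c * w * (c * w * c⁻¹) * c = c ^ 2`. Free groups have
unique roots (Mathlib's `IsMulTorsionFree` is injectivity of `x ↦ x ^ n`, proved for free groups by
comparing cyclic reductions of powers), so `c * w = c` and `w = 1`. Mere absence of torsion would
not suffice: the Klein bottle group `⟨a, b | b a b⁻¹ = a⁻¹⟩` has no torsion.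
-/

theorem mul_sq_eq_sq_of_conj_eq_inv {G : Type*} [Group G] {c w : G} (h : c * w * c⁻¹ = w⁻¹) :
    (c * w) ^ 2 = c ^ 2 :=
  calc (c * w) ^ 2 = c * w * (c * w * c⁻¹) * c := by
        simp only [sq, mul_assoc, inv_mul_cancel, mul_one]
    _ = c ^ 2 := by rw [h, mul_inv_cancel_right, sq]

theorem eq_one_of_isConj_self_inv {G : Type*} [Group G] [IsMulTorsionFree G] {w : G}
    (h : IsConj w w⁻¹) : w = 1 := by
  obtain ⟨c, hc⟩ := isConj_iff.mp h
  have hcw : c * w = c := pow_left_injective two_ne_zero (mul_sq_eq_sq_of_conj_eq_inv hc)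
  exact mul_eq_left.mp hcw

/-- In a free group, a nontrivial element is not conjugate to its inverse. -/
theorem stmt8 {X : Type*} (w : FreeGroup X) (hw : w ≠ 1) : ¬ IsConj w w⁻¹ :=
  fun h => hw (eq_one_of_isConj_self_inv h)
end

section
/- The subgroup H₂ = ⟨x^n, y^n⟩ of the free group F = F(x, y) has the Congruence Extension Property: for every normal subgroup N of H₂, H₂ ∩ ⟨⟨N⟩⟩_F = N. -/
section Aux

variable (n : ℕ) [NeZero n] (G : Type) [Group G]

/-- Translation automorphism of `ZMod n → G`. -/
def shiftAut (z : ZMod n) : MulAut (ZMod n → G) where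
  toFun f i := f (i - z)
  invFun f i := f (i + z)
  left_inv f := funext fun i => by simp
  right_inv f := funext fun i => by simp
  map_mul' f g := rfl

/-- The shift action as a monoid hom into `MulAut`. -/
def shiftHom : Multiplicative (ZMod n) →* MulAut (ZMod n → G) where
  toFun z := shiftAut n G z.toAdd
  map_one' := by
    ext f i
    show f (i - 0) = f i
    rw [sub_zero]
  map_mul' z w := by
    ext f i
    show f (i - (z.toAdd + w.toAdd)) = f (i - z.toAdd - w.toAdd)
    rw [sub_sub]

/-- The wreath product `G ≀ (ℤ/n)`. -/
abbrev Wr := SemidirectProduct (ZMod n → G) (Multiplicative (ZMod n)) (shiftHom n G)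

/-- Diagonal embedding of `G` into the wreath product. -/
def diag : G →* Wr n G :=
  SemidirectProduct.inl.comp
    { toFun := Function.const (ZMod n)
      map_one' := rfl
      map_mul' := fun _ _ => rfl }

lemma diag_injective : Function.Injective (diag n G) := by
  intro g h hgh
  have := congrArg SemidirectProduct.left hgh
  exact congrFun this 0

/-- Levin's element: an "n-th root" of `diag c`. -/
def levin (c : G) : Wr n G :=
  ⟨fun i => if i = 0 then c else 1, Multiplicative.ofAdd (1 : ZMod n)⟩

lemma levin_pow (c : G) (k : ℕ) : (levin n G c) ^ k =
    ⟨fun i => ((List.range k).map (fun (j : ℕ) => if i = ((j : ℕ) : ZMod n) then c else 1)).prod,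
      Multiplicative.ofAdd (k : ZMod n)⟩ := by
  induction k with
  | zero =>
    ext <;> simp
  | succ k ih =>
    rw [pow_succ, ih]
    ext i
    · show (((List.range k).map (fun (j : ℕ) => if i = ((j : ℕ) : ZMod n) then c else 1)).prod) *
        (shiftHom n G (Multiplicative.ofAdd (k : ZMod n))
          (fun i => if i = 0 then c else 1)) i = _
      have h1 : (shiftHom n G (Multiplicative.ofAdd (k : ZMod n))
          (fun i => if i = 0 then c else 1)) i = if i = (k : ZMod n) then c else 1 := by
        show (if i - (k : ZMod n) = 0 then c else 1) = _
        simp [sub_eq_zero]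
      rw [h1]
      show _ = ((List.range (k+1)).map (fun (j : ℕ) => if i = ((j : ℕ) : ZMod n) then c else 1)).prod
      rw [List.range_succ, List.map_append, List.prod_append]
      simp
    · show Multiplicative.ofAdd (k : ZMod n) * Multiplicative.ofAdd (1 : ZMod n) = _
      rw [← ofAdd_add]
      push_cast
      rfl

lemma levin_prod_aux (c : G) (i : ZMod n) : ∀ k, k ≤ n →
    ((List.range k).map (fun (j : ℕ) => if i = ((j : ℕ) : ZMod n) then c else 1)).prod
      = if i.val < k then c else 1 := by
  intro k
  induction k with
  | zero => simp
  | succ k ih =>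
    intro hk
    rw [List.range_succ, List.map_append, List.prod_append, ih (by omega)]
    have hcast : i = (k : ZMod n) ↔ i.val = k := by
      constructor
      · intro h
        rw [h, ZMod.val_natCast, Nat.mod_eq_of_lt (by omega)]
      · intro h
        rw [← h, ZMod.natCast_val, ZMod.cast_id]
    rcases lt_trichotomy i.val k with h | h | h
    · rw [if_pos h, if_pos (by omega)]
      have hne : i.val ≠ k := by omega
      simp [hcast, hne]
    · rw [if_neg (by omega), if_pos (by omega)]
      simp [hcast, h]
    · rw [if_neg (by omega), if_neg (by omega)]
      have hne : i.val ≠ k := by omega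
      simp [hcast, hne]

lemma levin_pow_n (c : G) : (levin n G c) ^ n = diag n G c := by
  rw [levin_pow]
  ext i
  · show ((List.range n).map (fun (j : ℕ) => if i = ((j : ℕ) : ZMod n) then c else 1)).prod = c
    rw [levin_prod_aux n G c i n le_rfl, if_pos (ZMod.val_lt i)]
  · show Multiplicative.ofAdd (n : ZMod n) = 1
    rw [ZMod.natCast_self]
    rfl

end Aux

/-- The subgroup `H₂ = ⟨x^n, y^n⟩` of the free group on two generators has the
Congruence Extension Property: for every normal subgroup `N` of `H₂`,
`H₂ ∩ ⟪N⟫_F = N`. -/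
theorem stmt11 (n : ℕ) (hn : 1 ≤ n) (H : Subgroup (FreeGroup Bool))
    (hH : H = Subgroup.closure {FreeGroup.of true ^ n, FreeGroup.of false ^ n})
    (N : Subgroup (FreeGroup Bool)) (hNH : N ≤ H)
    (hnorm : ∀ h ∈ H, ∀ x ∈ N, h * x * h⁻¹ ∈ N) :
    (H : Set (FreeGroup Bool)) ∩ (Subgroup.normalClosure (N : Set (FreeGroup Bool)) : Set (FreeGroup Bool))
      = (N : Set (FreeGroup Bool)) := by
  haveI : NeZero n := ⟨by omega⟩
  subst hH
  set H := Subgroup.closure {FreeGroup.of true ^ n, FreeGroup.of false ^ n} with hHdef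
  haveI : (N.subgroupOf H).Normal := by
    constructor
    rintro ⟨v, hvH⟩ hvN ⟨h, hh⟩
    rw [Subgroup.mem_subgroupOf] at hvN ⊢
    exact hnorm h hh v hvN
  set G := H ⧸ N.subgroupOf H with hGdef
  let Q : H →* G := QuotientGroup.mk' (N.subgroupOf H)
  have hxH : FreeGroup.of true ^ n ∈ H := Subgroup.subset_closure (by left; rfl)
  have hyH : FreeGroup.of false ^ n ∈ H := Subgroup.subset_closure (by right; rfl)
  let a : G := Q ⟨FreeGroup.of true ^ n, hxH⟩
  let b : G := Q ⟨FreeGroup.of false ^ n, hyH⟩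
  let ψ : FreeGroup Bool →* Wr n G :=
    FreeGroup.lift (fun t : Bool => if t then levin n G a else levin n G b)
  have key : ∀ w (hw : w ∈ H), ψ w = diag n G (Q ⟨w, hw⟩) := by
    intro w hw
    induction hw using Subgroup.closure_induction with
    | mem v hv =>
      rcases hv with hv | hv
      · subst hv
        have : ψ (FreeGroup.of true ^ n) = levin n G a ^ n := by
          rw [map_pow]; simp [ψ]
        rw [this, levin_pow_n]
      · subst hv
        have : ψ (FreeGroup.of false ^ n) = levin n G b ^ n := by
          rw [map_pow]; simp [ψ]
        rw [this, levin_pow_n]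
    | one =>
      simp only [map_one]
      have : (⟨(1 : FreeGroup Bool), one_mem H⟩ : H) = 1 := rfl
      rw [this, map_one, map_one]
    | mul v w hv hw ihv ihw =>
      rw [map_mul, ihv, ihw]
      have : (⟨v * w, mul_mem hv hw⟩ : H) = ⟨v, hv⟩ * ⟨w, hw⟩ := rfl
      rw [this, map_mul, map_mul]
    | inv v hv ihv =>
      rw [map_inv, ihv]
      have : (⟨v⁻¹, inv_mem hv⟩ : H) = (⟨v, hv⟩ : H)⁻¹ := rfl
      rw [this, map_inv, map_inv]
  have hker : Subgroup.normalClosure (N : Set (FreeGroup Bool)) ≤ ψ.ker := by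
    apply Subgroup.normalClosure_le_normal
    intro v hv
    have hvH : v ∈ H := hNH hv
    rw [SetLike.mem_coe, MonoidHom.mem_ker, key v hvH]
    have : Q ⟨v, hvH⟩ = 1 := by
      rw [QuotientGroup.mk'_apply, QuotientGroup.eq_one_iff]
      rwa [Subgroup.mem_subgroupOf]
    rw [this, map_one]
  ext w
  simp only [Set.mem_inter_iff, SetLike.mem_coe]
  constructor
  · rintro ⟨hwH, hwNC⟩
    have h1 : ψ w = 1 := hker hwNC
    rw [key w hwH] at h1
    have h2 : Q ⟨w, hwH⟩ = 1 := diag_injective n G (by rw [h1, map_one])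
    rw [QuotientGroup.mk'_apply, QuotientGroup.eq_one_iff, Subgroup.mem_subgroupOf] at h2
    exact h2
  · intro hw
    exact ⟨hNH hw, Subgroup.subset_normalClosure hw⟩
end

section
/- The subgroup H₁ = ⟨x^n, y⁻¹x^n y⟩ of the free group F = F(x, y) (n ≥ 2) is an S-subgroup of F: the elements w = x^n ∈ H₁ and u = y⁻¹x^n y ∈ H₁ are conjugate in F but not conjugate in H₁. -/
open Matrix

namespace Stmt12Aux

abbrev GL2 := GL (Fin 2) ℚ

def A : GL2 :=
  ⟨!![1,1;0,1], !![1,-1;0,1],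
   by norm_num [Matrix.mul_fin_two, ← Matrix.one_fin_two],
   by norm_num [Matrix.mul_fin_two, ← Matrix.one_fin_two]⟩

def B : GL2 :=
  ⟨!![2,0;0,1], !![(1:ℚ)/2,0;0,1],
   by norm_num [Matrix.mul_fin_two, ← Matrix.one_fin_two],
   by norm_num [Matrix.mul_fin_two, ← Matrix.one_fin_two]⟩

def φ : FreeGroup Bool →* GL2 := FreeGroup.lift (fun b => bif b then A else B)

lemma φ_x : φ (.of true) = A := by simp [φ]
lemma φ_y : φ (.of false) = B := by simp [φ]

lemma A_pow_val (n : ℕ) :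
    ((A ^ n : GL2) : Matrix (Fin 2) (Fin 2) ℚ) = !![1,(n:ℚ);0,1] := by
  induction n with
  | zero => simp [Matrix.one_fin_two]
  | succ k ih =>
      rw [pow_succ, Units.val_mul, ih]
      show _ * (A : Matrix (Fin 2) (Fin 2) ℚ) = _
      rw [show (A : Matrix (Fin 2) (Fin 2) ℚ) = !![1,1;0,1] from rfl,
        Matrix.mul_fin_two]
      ext i j
      fin_cases i <;> fin_cases j <;> push_cast <;> simp <;> ring

/-- determinant as a map on `GL2`. -/
def d : GL2 →* ℚ := Matrix.detMonoidHom.comp (Units.coeHom _)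

lemma d_A : d A = 1 := by
  show (!![(1:ℚ),1;0,1]).det = 1
  rw [Matrix.det_fin_two_of]; norm_num

lemma d_B : d B = 2 := by
  show (!![(2:ℚ),0;0,1]).det = 2
  rw [Matrix.det_fin_two_of]; norm_num

lemma d_B_inv : d B⁻¹ = 1/2 := by
  have h : d B * d B⁻¹ = 1 := by rw [← _root_.map_mul, mul_inv_cancel, _root_.map_one]
  rw [d_B] at h; linarith

lemma d_φxn (n : ℕ) : d (φ ((FreeGroup.of true) ^ n)) = 1 := by
  rw [map_pow, φ_x]
  show ((A ^ n : GL2) : Matrix (Fin 2) (Fin 2) ℚ).det = 1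
  rw [A_pow_val, Matrix.det_fin_two_of]; norm_num

lemma d_one_of_mem {n : ℕ} {b : FreeGroup Bool}
    (hb : b ∈ Subgroup.closure {(FreeGroup.of true) ^ n,
      (FreeGroup.of false)⁻¹ * (FreeGroup.of true) ^ n * (FreeGroup.of false)}) :
    d (φ b) = 1 := by
  induction hb using Subgroup.closure_induction with
  | mem g hg =>
      rcases hg with hg | hg
      · rw [hg]; exact d_φxn n
      · rw [hg]
        simp only [_root_.map_mul, map_inv, φ_y, d_B_inv, d_φxn n, d_B]
        norm_num
  | one => simp
  | mul g h _ _ hg hh => rw [_root_.map_mul, _root_.map_mul, hg, hh, mul_one]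
  | inv g _ hg =>
      have h1 : d (φ g) * d (φ g⁻¹) = 1 := by
        rw [← _root_.map_mul, ← _root_.map_mul, mul_inv_cancel, _root_.map_one, _root_.map_one]
      rw [hg, one_mul] at h1; exact h1

lemma no_rat_sq_half (a : ℚ) : a * a ≠ 1/2 := by
  intro h
  have hr : (a : ℝ) * (a : ℝ) = 1/2 := by
    have := congrArg (fun q : ℚ => (q : ℝ)) h
    push_cast at this
    linarith
  have h2 : (2 * (a : ℝ)) ^ 2 = 2 := by ring_nf; linarith
  have habs : ((|2 * a| : ℚ) : ℝ) = Real.sqrt 2 := by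
    push_cast
    rw [← Real.sqrt_sq_eq_abs, h2]
  exact Rat.not_irrational _ (habs ▸ irrational_sqrt_two)

lemma key {n : ℕ} (hn : 2 ≤ n) :
    ¬ ∃ b ∈ Subgroup.closure {(FreeGroup.of true) ^ n,
        (FreeGroup.of false)⁻¹ * (FreeGroup.of true) ^ n * (FreeGroup.of false)},
      b⁻¹ * (FreeGroup.of true) ^ n * b
        = (FreeGroup.of false)⁻¹ * (FreeGroup.of true) ^ n * (FreeGroup.of false) := by
  rintro ⟨b, hb, heq⟩
  set X := FreeGroup.of true with hX
  set Y := FreeGroup.of false with hY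
  have hcomm : X ^ n * (b * Y⁻¹) = (b * Y⁻¹) * X ^ n := by
    rw [show X ^ n * (b * Y⁻¹) = b * (b⁻¹ * X ^ n * b) * Y⁻¹ by group, heq]
    group
  have h1 : φ (X ^ n) * φ (b * Y⁻¹) = φ (b * Y⁻¹) * φ (X ^ n) := by
    rw [← _root_.map_mul, ← _root_.map_mul, hcomm]
  rw [map_pow, hX, φ_x] at h1
  set M : Matrix (Fin 2) (Fin 2) ℚ := ((φ (b * Y⁻¹) : GL2) : Matrix (Fin 2) (Fin 2) ℚ) with hM
  have h2 : (!![1,(n:ℚ);0,1]) * M = M * !![1,(n:ℚ);0,1] := by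
    have h3 := congrArg (Units.val) h1
    rw [Units.val_mul, Units.val_mul, A_pow_val] at h3
    exact h3
  have hn0 : (n : ℚ) ≠ 0 := Nat.cast_ne_zero.mpr (by omega)
  -- extract entries
  have e01 := congrFun (congrFun h2 0) 1
  have e11 := congrFun (congrFun h2 1) 1
  simp [Matrix.mul_apply, Fin.sum_univ_two] at e01 e11
  have hdiag : M 1 1 = M 0 0 := by
    have := mul_left_cancel₀ hn0 (by linarith : (n:ℚ) * M 1 1 = (n:ℚ) * M 0 0)
    exact this
  have hlow : M 1 0 = 0 := by
    rcases e11 with h | h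
    · exact h
    · exact absurd h (by omega)
  -- determinant of M
  have hdet : M.det = M 0 0 * M 0 0 := by
    rw [Matrix.det_fin_two, hdiag, hlow]; ring
  have hdval : M.det = 1/2 := by
    show d (φ (b * Y⁻¹)) = 1/2
    rw [_root_.map_mul, _root_.map_mul, map_inv, hY, φ_y, d_one_of_mem hb, d_B_inv]
    norm_num
  exact no_rat_sq_half (M 0 0) (by rw [← hdet, hdval])

end Stmt12Aux

/-- The subgroup `H₁ = ⟨x^n, y⁻¹x^n y⟩` of the free group on `{x, y}` (`n ≥ 2`) is an
S-subgroup: `x^n` and `y⁻¹x^n y` are conjugate in `F` but not conjugate in `H₁`. -/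
theorem stmt12 (n : ℕ) (hn : 2 ≤ n) (x y : FreeGroup Bool)
    (hx : x = FreeGroup.of true) (hy : y = FreeGroup.of false)
    (H : Subgroup (FreeGroup Bool))
    (hH : H = Subgroup.closure {x ^ n, y⁻¹ * x ^ n * y}) :
    IsConj (x ^ n) (y⁻¹ * x ^ n * y) ∧
      (¬ ∃ b ∈ H, b⁻¹ * x ^ n * b = y⁻¹ * x ^ n * y) ∧
      IsSSubgroup H := by
  subst hx hy hH
  have hkey := Stmt12Aux.key hn
  refine ⟨isConj_iff.mpr ⟨(FreeGroup.of false)⁻¹, by group⟩, hkey, ?_⟩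
  refine ⟨(FreeGroup.of true) ^ n,
    Subgroup.subset_closure (Set.mem_insert _ _), fun hcontra => ?_⟩
  have hmem : (FreeGroup.of false)⁻¹ * (FreeGroup.of true) ^ n * (FreeGroup.of false) ∈
      conjClassIn (⊤ : Subgroup (FreeGroup Bool)) ((FreeGroup.of true) ^ n) ∩
        (Subgroup.closure {(FreeGroup.of true) ^ n,
          (FreeGroup.of false)⁻¹ * (FreeGroup.of true) ^ n * (FreeGroup.of false)} :
            Set (FreeGroup Bool)) := by
    constructor
    · exact ⟨FreeGroup.of false, Subgroup.mem_top _, rfl⟩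
    · exact Subgroup.subset_closure (Set.mem_insert_of_mem _ rfl)
  rw [← hcontra] at hmem
  obtain ⟨h, hh, hconj⟩ := hmem
  exact hkey ⟨h, hh, hconj.symm⟩
end

section
/- Let F be the free group on {a, b, c} and H = ⟨a⁴, a²ba, aca², bc⁻¹⟩, freely generated by w₁ = a⁴, w₂ = a²ba, w₃ = aca², w₄ = bc⁻¹. For every n, the element [w₁ⁿ, w₄] lies in ⟨⟨Nₙ⟩⟩_F where Nₙ = ⟨⟨[w₁ⁿ, w₂], [w₁ⁿ, w₃]⟩⟩_H, but [w₁ⁿ, w₄] ∉ Nₙ; consequently H does not have ACEP in F. -/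
open scoped commutatorElement

/-!
Modulo `⟪Nₙ⟫_F` the element `w₁ⁿ` commutes with `w₂`, `w₃` and with `a` (as `w₁ = a⁴`), hence
with `w₄ = a⁻² w₂ a w₃⁻¹ a`.

To see `[w₁ⁿ, w₄] ∉ Nₙ`, let `F` act on four copies of the infinite dihedral group
`D∞ = ⟨r, s⟩`, so that `H` maps the copy over `0` to itself by left translations, through
`w₁ ↦ r`, `w₂, w₃ ↦ 1`, `w₄ ↦ s`. This homomorphism `H → D∞` kills `Nₙ` but sends `[w₁ⁿ, w₄]`
to `r²ⁿ ≠ 1`.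

Against ACEP: `F` is residually finite, so a finite set `Φ` of nontrivial elements misses some
normal subgroup `K` of finite index `m`. Then `w₁ᵐ ∈ K`, so `Nₘ ≤ K` misses `Φ`, while
`[w₁ᵐ, w₄] ∈ (H ∩ ⟪Nₘ⟫_F) \ Nₘ`.
-/

open Equiv

namespace Subgroup

variable {G : Type*} [Group G] {H : Subgroup G} {S : Set G}

/-- `⟪S⟫_H`; for `S ⊆ H` it is the normal closure of `S` in `H`. -/
def normalClosureIn (H : Subgroup G) (S : Set G) : Subgroup G :=
  closure {x | ∃ h ∈ H, ∃ s ∈ S, x = h * s * h⁻¹}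

theorem normalClosureIn_pair (s t : G) :
    H.normalClosureIn {s, t} = closure {x | ∃ h ∈ H, x = h * s * h⁻¹ ∨ x = h * t * h⁻¹} := by
  simp only [normalClosureIn, Set.mem_insert_iff, Set.mem_singleton_iff, exists_eq_or_imp,
    exists_eq_left]

theorem subset_normalClosureIn : S ⊆ H.normalClosureIn S :=
  fun s hs => subset_closure ⟨1, H.one_mem, s, hs, by group⟩

theorem normalClosureIn_le {K : Subgroup G} (hK : ∀ h ∈ H, ∀ x ∈ K, h * x * h⁻¹ ∈ K)
    (hSK : S ⊆ K) : H.normalClosureIn S ≤ K :=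
  (closure_le _).2 fun _ ⟨h, hh, s, hs, hx⟩ => hx ▸ hK h hh s (hSK hs)

theorem normalClosureIn_le_self (hS : S ⊆ H) : H.normalClosureIn S ≤ H :=
  normalClosureIn_le (fun _ hh _ hx => mul_mem (mul_mem hh hx) (inv_mem hh)) hS

theorem conj_mem_normalClosureIn {h x : G} (hh : h ∈ H) (hx : x ∈ H.normalClosureIn S) :
    h * x * h⁻¹ ∈ H.normalClosureIn S := by
  have : H.normalClosureIn S ≤ (H.normalClosureIn S).comap (MulAut.conj h).toMonoidHom :=
    (closure_le _).2 fun _ ⟨k, hk, s, hs, hx⟩ =>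
      subset_closure ⟨h * k, mul_mem hh hk, s, hs, by simp [hx]; group⟩
  exact this hx

theorem notMem_normalClosureIn_of_monoidHom {D : Type*} [Group D] (ρ : H →* D)
    (hS : ∀ s ∈ S, ∃ hs : s ∈ H, ρ ⟨s, hs⟩ = 1) {x : G} (hx : x ∈ H) (hρx : ρ ⟨x, hx⟩ ≠ 1) :
    x ∉ H.normalClosureIn S := by
  have hle : H.normalClosureIn S ≤ ρ.ker.map H.subtype := by
    refine normalClosureIn_le ?_ fun s hs => ?_
    · rintro h hh _ ⟨k, hk, rfl⟩
      exact ⟨⟨h, hh⟩ * k * ⟨h, hh⟩⁻¹, ρ.normal_ker.conj_mem k hk _, rfl⟩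
    · obtain ⟨hs, hρs⟩ := hS s hs
      exact ⟨⟨s, hs⟩, hρs, rfl⟩
  rintro hxN
  obtain ⟨k, hk, hkx⟩ := hle hxN
  obtain rfl : k = ⟨x, hx⟩ := Subtype.ext hkx
  exact hρx hk

end Subgroup

theorem QuotientGroup.mk_mem_centralizer_singleton_iff {G : Type*} [Group G] {M : Subgroup G}
    [M.Normal] {g x : G} :
    (x : G ⧸ M) ∈ Subgroup.centralizer {(g : G ⧸ M)} ↔ ⁅g, x⁆ ∈ M := by
  rw [Subgroup.mem_centralizer_singleton_iff, ← eq_one_iff]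
  change _ ↔ mk' M ⁅g, x⁆ = 1
  rw [map_commutatorElement, commutatorElement_eq_one_iff_mul_comm, eq_comm]
  rfl

theorem Finset.exists_perm_eq_of_eq_mul_left {G : Type*} [Group G] (P : Finset G) (g : G) :
    ∃ σ : Perm P, ∀ x y : P, (y : G) = g * x → σ x = y := by
  classical
  let e : {x : P // g * (x : G) ∈ P} ≃ {x : P // g⁻¹ * (x : G) ∈ P} :=
    { toFun := fun x => ⟨⟨g * x.1, x.2⟩, by simp⟩
      invFun := fun x => ⟨⟨g⁻¹ * x.1, x.2⟩, by simp⟩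
      left_inv := fun x => by ext; simp
      right_inv := fun x => by ext; simp }
  refine ⟨e.extendSubtype, fun x y hxy => ?_⟩
  rw [e.extendSubtype_apply_of_mem x (hxy ▸ y.2)]
  exact Subtype.ext hxy.symm

/-- The elements spelled by the suffixes of a word for `x` form a finite set `P`. Completing the
partial bijections "left multiplication by a generator, where it stays inside `P`" to
permutations of `P` gives a finite permutation representation in which `x` moves `1` to `x`. -/
instance FreeGroup.residuallyFinite {α : Type*} : Group.ResiduallyFinite (FreeGroup α) := by
  classical
  refine Group.residuallyFinite_of_forall_exists_finite_monoidHom fun x hx => ?_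
  let P : Finset (FreeGroup α) := (x.toWord.tails.map mk).toFinset
  have mem_P {L} (hL : L <:+ x.toWord) : mk L ∈ P := by simpa [P] using ⟨L, hL, rfl⟩
  choose σ hσ using fun i : α => P.exists_perm_eq_of_eq_mul_left (of i)
  have orbit (L) (hL : L <:+ x.toWord) :
      (lift σ (mk L) ⟨1, mem_P List.nil_suffix⟩ : FreeGroup α) = mk L := by
    induction L with
    | nil => simp [← one_eq_mk]
    | cons p L ih =>
      obtain ⟨i, b⟩ := p
      have hcons : mk ((i, b) :: L) = mk [(i, b)] * mk L := (mul_mk (L₁ := [(i, b)])).symm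
      rw [hcons, MonoidHom.map_mul, Perm.mul_apply]
      generalize hy : lift σ (mk L) _ = y
      replace hy : (y : FreeGroup α) = mk L := hy ▸ ih ((List.suffix_cons _ _).trans hL)
      let y' : P := ⟨mk ((i, b) :: L), mem_P hL⟩
      have hy' : (y' : FreeGroup α) = mk [(i, b)] * y := by rw [hy]; exact hcons
      suffices lift σ (mk [(i, b)]) y = y' by rw [this, hy', hy]
      cases b
      · change lift σ (of i)⁻¹ y = y'
        rw [MonoidHom.map_inv, lift_apply_of, Perm.inv_eq_iff_eq]
        exact (hσ i y' y (by rw [hy']; exact (mul_inv_cancel_left _ _).symm)).symm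
      · exact hσ i y y' hy'
  refine ⟨Perm P, inferInstance, inferInstance, lift σ, fun h => hx ?_⟩
  have := orbit x.toWord List.suffix_rfl
  rw [mk_toWord, h] at this
  exact this.symm

theorem Group.exists_normal_finiteIndex_forall_notMem {G : Type*} [Group G]
    [Group.ResiduallyFinite G] (Φ : Finset G) (hΦ : ∀ x ∈ Φ, x ≠ 1) :
    ∃ K : Subgroup G, K.Normal ∧ K.FiniteIndex ∧ ∀ x ∈ Φ, x ∉ K := by
  choose K hK using fun x : Φ => exists_finiteIndexNormalSubgroup_notMem (x : G) (hΦ x x.2)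
  exact ⟨⨅ x, (K x).toSubgroup, Subgroup.normal_iInf_normal fun x => inferInstance,
    Subgroup.finiteIndex_iInf fun x => inferInstance,
    fun x hx hxK => hK ⟨x, hx⟩ (Subgroup.mem_iInf.1 hxK _)⟩

theorem not_ACEP_of_forall_pow {G : Type*} [Group G] [Group.ResiduallyFinite G]
    {H : Subgroup G} {g u v x : G} (hg : g ∈ H) (hu : u ∈ H) (hv : v ∈ H) (hx : x ∈ H)
    (h : ∀ m ≠ 0,
      ⁅g ^ m, x⁆ ∈ Subgroup.normalClosure (H.normalClosureIn {⁅g ^ m, u⁆, ⁅g ^ m, v⁆} : Set G) ∧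
      ⁅g ^ m, x⁆ ∉ H.normalClosureIn {⁅g ^ m, u⁆, ⁅g ^ m, v⁆}) :
    ¬ ACEP H := by
  rintro ⟨Φ, hΦ, hACEP⟩
  obtain ⟨K, hKn, hKf, hΦK⟩ :=
    Group.exists_normal_finiteIndex_forall_notMem Φ fun x hx => (hΦ x hx).2
  set m := K.index
  have hgK : g ^ m ∈ K := K.pow_index_mem g
  have hcommH : ∀ y ∈ H, ⁅g ^ m, y⁆ ∈ H := fun y hy =>
    mul_mem (mul_mem (mul_mem (pow_mem hg m) hy) (inv_mem (pow_mem hg m))) (inv_mem hy)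
  have hcommK (y : G) : ⁅g ^ m, y⁆ ∈ K :=
    Subgroup.commutator_le_left K ⊤ (Subgroup.commutator_mem_commutator hgK (Subgroup.mem_top y))
  set N := H.normalClosureIn {⁅g ^ m, u⁆, ⁅g ^ m, v⁆}
  have hNH : N ≤ H := Subgroup.normalClosureIn_le_self (by
    rintro _ (rfl | rfl)
    exacts [hcommH u hu, hcommH v hv])
  have hNK : N ≤ K := Subgroup.normalClosureIn_le (fun h _ y hy => hKn.conj_mem y hy h) (by
    rintro _ (rfl | rfl)
    exacts [hcommK u, hcommK v])
  have hHN := hACEP N hNH (fun _ hh _ hy => Subgroup.conj_mem_normalClosureIn hh hy)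
    fun x hx hxN => hΦK x hx (hNK hxN)
  obtain ⟨hmem, hnotMem⟩ := h m hKf.index_ne_zero
  exact hnotMem (hHN ▸ ⟨hcommH x hx, hmem⟩ : ⁅g ^ m, x⁆ ∈ (N : Set G))

theorem DihedralGroup.commutatorElement_r_sr {n : ℕ} (i j : ZMod n) :
    ⁅r i, sr j⁆ = r (i + i) := by
  simp only [commutatorElement_def, r_mul_sr, inv_r, sr_mul_r, inv_sr, sr_mul_sr]
  ring_nf

section FiberStabilizer

variable {ι D : Type*} [Group D]

def shear (τ : Perm ι) (d : ι → D) : Perm (ι × D) :=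
  τ.prodShear fun i => Equiv.mulLeft (d i)

@[simp]
theorem shear_apply (τ : Perm ι) (d : ι → D) (i : ι) (γ : D) :
    shear τ d (i, γ) = (τ i, d i * γ) :=
  rfl

@[simp]
theorem shear_symm_apply (τ : Perm ι) (d : ι → D) (i : ι) (γ : D) :
    (shear τ d).symm (i, γ) = (τ.symm i, (d (τ.symm i))⁻¹ * γ) := by
  rw [Equiv.symm_apply_eq]
  simp

variable (i₀ : ι)

def fiberStabilizer : Subgroup (Perm (ι × D)) where
  carrier := {σ | ∃ δ : D, ∀ γ, σ (i₀, γ) = (i₀, δ * γ)}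
  one_mem' := ⟨1, fun γ => by simp⟩
  mul_mem' := by
    rintro σ τ ⟨δ, hσ⟩ ⟨ε, hτ⟩
    exact ⟨δ * ε, fun γ => by rw [Perm.mul_apply, hτ, hσ, mul_assoc]⟩
  inv_mem' := by
    rintro σ ⟨δ, hσ⟩
    exact ⟨δ⁻¹, fun γ => by rw [Perm.inv_eq_iff_eq, hσ, mul_inv_cancel_left]⟩

def fiberTranslation : fiberStabilizer (D := D) i₀ →* D where
  toFun σ := ((σ : Perm (ι × D)) (i₀, 1)).2
  map_one' := rfl
  map_mul' := by
    rintro ⟨σ, δ, hσ⟩ ⟨τ, ε, hτ⟩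
    simp [hσ, hτ]

theorem fiberTranslation_eq {σ : Perm (ι × D)} (hσ : σ ∈ fiberStabilizer i₀) {δ : D}
    (h : ∀ γ, σ (i₀, γ) = (i₀, δ * γ)) : fiberTranslation i₀ ⟨σ, hσ⟩ = δ := by
  change (σ (i₀, 1)).2 = δ
  simp [h]

end FiberStabilizer

namespace ACEPCounterexample

open FreeGroup

abbrev w₁ : FreeGroup (Fin 3) := of 0 ^ 4
abbrev w₂ : FreeGroup (Fin 3) := of 0 ^ 2 * of 1 * of 0
abbrev w₃ : FreeGroup (Fin 3) := of 0 * of 2 * of 0 ^ 2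
abbrev w₄ : FreeGroup (Fin 3) := of 1 * (of 2)⁻¹
abbrev H : Subgroup (FreeGroup (Fin 3)) := Subgroup.closure {w₁, w₂, w₃, w₄}

theorem w₁_mem : w₁ ∈ H := Subgroup.subset_closure (by simp)
theorem w₂_mem : w₂ ∈ H := Subgroup.subset_closure (by simp)
theorem w₃_mem : w₃ ∈ H := Subgroup.subset_closure (by simp)
theorem w₄_mem : w₄ ∈ H := Subgroup.subset_closure (by simp)

theorem commutator_mem_normalClosure (n : ℕ) :
    ⁅w₁ ^ n, w₄⁆ ∈
      Subgroup.normalClosure (H.normalClosureIn {⁅w₁ ^ n, w₂⁆, ⁅w₁ ^ n, w₃⁆} : Set _) := by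
  set M := Subgroup.normalClosure
    (H.normalClosureIn {⁅w₁ ^ n, w₂⁆, ⁅w₁ ^ n, w₃⁆} : Set (FreeGroup (Fin 3)))
  let C := (Subgroup.centralizer {(↑(w₁ ^ n) : FreeGroup (Fin 3) ⧸ M)}).comap
    (QuotientGroup.mk' M)
  have mem_C {x} : x ∈ C ↔ ⁅w₁ ^ n, x⁆ ∈ M := QuotientGroup.mk_mem_centralizer_singleton_iff
  have hcomm : Commute (w₁ ^ n) (of 0) := ((Commute.refl _).pow_left 4).pow_left n
  have ha : of 0 ∈ C :=
    mem_C.2 (by rw [commutatorElement_eq_one_iff_mul_comm.2 hcomm.eq]; exact one_mem M)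
  have hw₂ : w₂ ∈ C :=
    mem_C.2 (Subgroup.subset_normalClosure (Subgroup.subset_normalClosureIn (by simp)))
  have hw₃ : w₃ ∈ C :=
    mem_C.2 (Subgroup.subset_normalClosure (Subgroup.subset_normalClosureIn (by simp)))
  have hw₄ : w₄ = (of 0)⁻¹ * (of 0)⁻¹ * w₂ * of 0 * w₃⁻¹ * of 0 := by
    simp only [w₂, w₃, w₄]
    group
  rw [← mem_C, hw₄]
  exact mul_mem (mul_mem (mul_mem (mul_mem (mul_mem (inv_mem ha) (inv_mem ha)) hw₂) ha)
    (inv_mem hw₃)) ha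

section BlockAction

variable {D : Type*} [Group D] (y z : D)

/-- `a ↦ (0 1 2 3)`, `b ↦ (1 2)`, `c ↦ (2 3)` on `Fin 4`, so that `H` fixes `0`; the `D`-labels
are chosen so that the loops `w₁, w₂, w₃, w₄` at `0` collect `y, 1, 1, z`. -/
def blockAction : FreeGroup (Fin 3) →* Perm (Fin 4 × D) :=
  lift ![shear (finRotate 4) ![1, 1, 1, y], shear (swap 1 2) ![z, y⁻¹, 1, 1],
    shear (swap 2 3) ![1, 1, y⁻¹, 1]]

theorem blockAction_w₁ (γ : D) : blockAction y z w₁ (0, γ) = (0, y * γ) := by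
  simp [blockAction, pow_succ]

theorem blockAction_w₂ (γ : D) : blockAction y z w₂ (0, γ) = (0, 1 * γ) := by
  simp [blockAction, pow_succ]

theorem blockAction_w₃ (γ : D) : blockAction y z w₃ (0, γ) = (0, 1 * γ) := by
  simp [blockAction, pow_succ]

theorem blockAction_w₄ (γ : D) : blockAction y z w₄ (0, γ) = (0, z * γ) := by
  simp [blockAction, swap_apply_of_ne_of_ne]

theorem le_comap_fiberStabilizer : H ≤ (fiberStabilizer 0).comap (blockAction y z) := by
  rw [Subgroup.closure_le]
  rintro _ (rfl | rfl | rfl | rfl)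
  exacts [⟨y, blockAction_w₁ y z⟩, ⟨1, blockAction_w₂ y z⟩, ⟨1, blockAction_w₃ y z⟩,
    ⟨z, blockAction_w₄ y z⟩]

def blockHom : H →* D :=
  (fiberTranslation 0).comp
    (((blockAction y z).comp H.subtype).codRestrict _ fun h => le_comap_fiberStabilizer y z h.2)

theorem blockHom_eq {w : FreeGroup (Fin 3)} (hw : w ∈ H) {δ : D}
    (h : ∀ γ, blockAction y z w (0, γ) = (0, δ * γ)) : blockHom y z ⟨w, hw⟩ = δ :=
  fiberTranslation_eq 0 _ h

end BlockAction

theorem commutator_notMem_normalClosureIn {n : ℕ} (hn : n ≠ 0) :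
    ⁅w₁ ^ n, w₄⁆ ∉ H.normalClosureIn {⁅w₁ ^ n, w₂⁆, ⁅w₁ ^ n, w₃⁆} := by
  set y := DihedralGroup.r (1 : ZMod 0)
  set z := DihedralGroup.sr (0 : ZMod 0)
  set ρ := blockHom y z
  let h₁ : H := ⟨w₁, w₁_mem⟩
  let h₂ : H := ⟨w₂, w₂_mem⟩
  let h₃ : H := ⟨w₃, w₃_mem⟩
  let h₄ : H := ⟨w₄, w₄_mem⟩
  have hρ₁ : ρ h₁ = y := blockHom_eq y z _ (blockAction_w₁ y z)
  have hρ₂ : ρ h₂ = 1 := blockHom_eq y z _ (blockAction_w₂ y z)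
  have hρ₃ : ρ h₃ = 1 := blockHom_eq y z _ (blockAction_w₃ y z)
  have hρ₄ : ρ h₄ = z := blockHom_eq y z _ (blockAction_w₄ y z)
  refine Subgroup.notMem_normalClosureIn_of_monoidHom ρ ?_ ⁅h₁ ^ n, h₄⁆.2 ?_
  · rintro _ (rfl | rfl)
    · refine ⟨⁅h₁ ^ n, h₂⁆.2, ?_⟩
      change ρ ⁅h₁ ^ n, h₂⁆ = 1
      simp [hρ₁, hρ₂]
    · refine ⟨⁅h₁ ^ n, h₃⁆.2, ?_⟩
      change ρ ⁅h₁ ^ n, h₃⁆ = 1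
      simp [hρ₁, hρ₃]
  · change ρ ⁅h₁ ^ n, h₄⁆ ≠ 1
    rw [map_commutatorElement, map_pow, hρ₁, hρ₄, DihedralGroup.r_one_pow,
      DihedralGroup.commutatorElement_r_sr, DihedralGroup.one_def, Ne, DihedralGroup.r.injEq]
    change (n : ℤ) + n ≠ 0
    omega

end ACEPCounterexample

/-- In `F = F(a,b,c)` with `H = ⟨a⁴, a²ba, aca², bc⁻¹⟩` and
`Nₙ = ⟪[w₁ⁿ,w₂], [w₁ⁿ,w₃]⟫_H`, the commutator `[w₁ⁿ,w₄]` belongs to `⟪Nₙ⟫_F` but not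
to `Nₙ`; consequently `H` does not have ACEP in `F`. -/
theorem stmt13 (a b c : FreeGroup (Fin 3))
    (ha : a = FreeGroup.of 0) (hb : b = FreeGroup.of 1) (hc : c = FreeGroup.of 2)
    (w1 w2 w3 w4 : FreeGroup (Fin 3))
    (h1 : w1 = a ^ 4) (h2 : w2 = a ^ 2 * b * a) (h3 : w3 = a * c * a ^ 2)
    (h4 : w4 = b * c⁻¹)
    (H : Subgroup (FreeGroup (Fin 3))) (hH : H = Subgroup.closure {w1, w2, w3, w4})
    (n : ℕ) (hn : n ≠ 0)
    (N : Subgroup (FreeGroup (Fin 3)))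
    (hN : N = Subgroup.closure
      {x | ∃ h ∈ H, x = h * ⁅w1 ^ n, w2⁆ * h⁻¹ ∨ x = h * ⁅w1 ^ n, w3⁆ * h⁻¹}) :
    ⁅w1 ^ n, w4⁆ ∈ Subgroup.normalClosure (N : Set (FreeGroup (Fin 3))) ∧
      ⁅w1 ^ n, w4⁆ ∉ N ∧ ¬ ACEP H := by
  open ACEPCounterexample in
  subst ha hb hc h1 h2 h3 h4 hH
  rw [← Subgroup.normalClosureIn_pair] at hN
  subst hN
  have key (m : ℕ) (hm : m ≠ 0) :=
    And.intro (commutator_mem_normalClosure m) (commutator_notMem_normalClosureIn hm)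
  exact ⟨(key n hn).1, (key n hn).2, not_ACEP_of_forall_pow w₁_mem w₂_mem w₃_mem w₄_mem key⟩
end
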